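/- arXiv:2207.09867 — 3 statements merged into one kernel-verified Lean document; each statement's English description precedes it below -/
import Mathlib

section
/- Fix $i \in I$ and suppose $r_i$ is a field automorphism of $\mathcal{Y}_m$ fixing $\mathbb{C}$ pointwise such that $r_i(y_i(n)) = \frac{P_i(n-2)}{P_i(n-1)}\, y_i(n)\, X_i(n-1)$ for all $n \in \mathbb{Z}/m\mathbb{Z}$ and $r_i(y_j(n)) = y_j(n)$ for all $j \neq i$ and all $n$. Then the fixed field $\{f \in \mathcal{Y}_m : r_i(f) = f\}$ equals $\mathcal{Z}_m^{(i)}$. Consequently, if such an automorphism $r_i$ is given for every $i \in I$, then $\bigcap_{i \in I}\{f \in \mathcal{Y}_m : r_i(f) = f\} = \bigcap_{i \in I} \mathcal{Z}_m^{(i)}$. -/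
/- Setting: `𝔤` a finite dimensional simple Lie algebra of simply-laced type with Cartan matrix
`A` indexed by `I = Fin ℓ` (encoded by: symmetric, diagonal entries `2`, off-diagonal entries in
`{0, -1}`, and positive definite — these conditions characterize the Cartan matrices of types
`A_ℓ`, `D_ℓ`, `E_ℓ`).  `Ly ℓ m` is the field of fractions of the (Laurent) polynomial ring over
`ℂ` in commuting variables `yv j n`, `j ∈ I`, `n ∈ ℤ/mℤ`. -/

noncomputable section

variable (ℓ : ℕ) (m : ℕ) [NeZero m]

/-- The ambient field `𝒴_m`. -/
abbrev Ly := FractionRing (MvPolynomial (Fin ℓ × ZMod m) ℂ)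

/-- The variable `y_j(n)`. -/
def yv (j : Fin ℓ) (n : ZMod m) : Ly ℓ m :=
  algebraMap (MvPolynomial (Fin ℓ × ZMod m) ℂ) (Ly ℓ m) (MvPolynomial.X (j, n))

variable (A : Matrix (Fin ℓ) (Fin ℓ) ℤ)

/-- `F_i(n) = ∏_{j<i, A i j ≠ 0} y_j(n+1) ∏_{j>i, A i j ≠ 0} y_j(n)`. -/
def Fv (i : Fin ℓ) (n : ZMod m) : Ly ℓ m :=
  (∏ j ∈ Finset.univ.filter fun j => j < i ∧ A i j ≠ 0, yv ℓ m j (n + 1)) *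
    ∏ j ∈ Finset.univ.filter fun j => i < j ∧ A i j ≠ 0, yv ℓ m j n

/-- `X_i(n) = F_i(n)/(y_i(n) y_i(n+1))`. -/
def Xv (i : Fin ℓ) (n : ZMod m) : Ly ℓ m :=
  Fv ℓ m A i n / (yv ℓ m i n * yv ℓ m i (n + 1))

/-- `P_i(n) = 1 + ∑_{k=0}^{m-2} X_i(n) X_i(n-1) ⋯ X_i(n-k)`. -/
def Pv (i : Fin ℓ) (n : ZMod m) : Ly ℓ m :=
  1 + ∑ k ∈ Finset.range (m - 1), ∏ j ∈ Finset.range (k + 1), Xv ℓ m A i (n - (j : ZMod m))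

/-- `z_i(n) = y_i(n)(1 + X_i(n))`. -/
def zv (i : Fin ℓ) (n : ZMod m) : Ly ℓ m := yv ℓ m i n * (1 + Xv ℓ m A i n)

/-- `𝒵_m^{(i)}`: the subfield of `𝒴_m` generated by `ℂ`, the `z_i(n)`, and the `y_j(n)`
for `j ≠ i`. -/
def Zfield (i : Fin ℓ) : IntermediateField ℂ (Ly ℓ m) :=
  IntermediateField.adjoin ℂ
    (Set.range (zv ℓ m A i) ∪ {x | ∃ j n, j ≠ i ∧ x = yv ℓ m j n})

/-! The automorphism `r_i` fixes every `z_i(n)` because of the identity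
`P_i(n-2) X_i(n-1) + P_i(n) = P_i(n-1) (1 + X_i(n))`, hence it fixes `𝒵 = 𝒵_m^{(i)}`.
Conversely, `y_i(n+1) = F_i(n) / (z_i(n) - y_i(n))` with `F_i(n), z_i(n) ∈ 𝒵`, so `𝒴_m = 𝒵(y)`
for `y = y_i(0)`, and going once around `ℤ/mℤ` gives a relation `y = (a y + b) / (c y + d)` over
`𝒵`. Its denominator `∏ₙ y_i(n) X_i(n)` is not fixed by `r_i`, so `c ≠ 0`, `y` is quadratic over
`𝒵` and `𝒴_m = 𝒵 + 𝒵 y`. Since `r_i` fixes `𝒵` but not `y`, its fixed field is `𝒵`.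
That `P_i(n) ≠ 0` and `∏ₙ X_i(n) ≠ 1` is seen by evaluating at `y_j(n) = 1`, resp. at
`y_i(n) = 2`, `y_j(n) = 1` for `j ≠ i`. -/

section FractionRingValue

variable {R K k : Type*} [CommRing R] [Field K] [Algebra R K] [Field k] (φ : R →+* k)

/-- `x` has the well-defined value `c` under `φ`: this is `φ` extended to the localization of `R`
at `ker φ`. -/
def HasValueAt (x : K) (c : k) : Prop :=
  ∃ p q : R, φ q ≠ 0 ∧ x = algebraMap R K p / algebraMap R K q ∧ φ p = c * φ q

variable {φ}

lemma hasValueAt_algebraMap (p : R) : HasValueAt φ (algebraMap R K p) (φ p) :=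
  ⟨p, 1, by simp, by simp, by simp⟩

lemma hasValueAt_zero : HasValueAt φ (0 : K) 0 := by
  simpa using hasValueAt_algebraMap (K := K) (φ := φ) 0

lemma hasValueAt_one : HasValueAt φ (1 : K) 1 := by
  simpa using hasValueAt_algebraMap (K := K) (φ := φ) 1

lemma algebraMap_ne_zero_of_map_ne_zero [IsFractionRing R K] {q : R} (hq : φ q ≠ 0) :
    algebraMap R K q ≠ 0 :=
  (map_ne_zero_iff _ (IsFractionRing.injective R K)).2 fun h => hq (by rw [h, map_zero])

namespace HasValueAt

variable {x y : K} {c d : k}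

lemma mul (hx : HasValueAt φ x c) (hy : HasValueAt φ y d) : HasValueAt φ (x * y) (c * d) := by
  obtain ⟨p, q, hq, rfl, hpq⟩ := hx
  obtain ⟨p', q', hq', rfl, hpq'⟩ := hy
  refine ⟨p * p', q * q', by simp [hq, hq'], by simp [div_mul_div_comm], ?_⟩
  simp only [map_mul, hpq, hpq']
  ring

lemma add [IsFractionRing R K] (hx : HasValueAt φ x c) (hy : HasValueAt φ y d) :
    HasValueAt φ (x + y) (c + d) := by
  obtain ⟨p, q, hq, rfl, hpq⟩ := hx
  obtain ⟨p', q', hq', rfl, hpq'⟩ := hy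
  refine ⟨p * q' + p' * q, q * q', by simp [hq, hq'], ?_, ?_⟩
  · rw [div_add_div _ _ (algebraMap_ne_zero_of_map_ne_zero hq)
      (algebraMap_ne_zero_of_map_ne_zero hq')]
    simp only [map_add, map_mul]
    ring
  · simp only [map_add, map_mul, hpq, hpq']
    ring

lemma inv (hx : HasValueAt φ x c) (hc : c ≠ 0) : HasValueAt φ x⁻¹ c⁻¹ := by
  obtain ⟨p, q, hq, rfl, hpq⟩ := hx
  have hp : φ p ≠ 0 := by rw [hpq]; exact mul_ne_zero hc hq
  refine ⟨q, p, hp, inv_div _ _, ?_⟩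
  rw [hpq, inv_mul_cancel_left₀ hc]

lemma div (hx : HasValueAt φ x c) (hy : HasValueAt φ y d) (hd : d ≠ 0) :
    HasValueAt φ (x / y) (c / d) := by
  simpa only [div_eq_mul_inv] using hx.mul (hy.inv hd)

lemma prod {ι : Type*} {s : Finset ι} {x : ι → K} {c : ι → k}
    (h : ∀ a ∈ s, HasValueAt φ (x a) (c a)) :
    HasValueAt φ (∏ a ∈ s, x a) (∏ a ∈ s, c a) := by
  induction s using Finset.cons_induction with
  | empty => simpa using hasValueAt_one
  | cons a s ha ih =>
    rw [Finset.prod_cons, Finset.prod_cons]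
    exact (h a (Finset.mem_cons_self a s)).mul (ih fun b hb => h b (Finset.mem_cons_of_mem hb))

lemma sum [IsFractionRing R K] {ι : Type*} {s : Finset ι} {x : ι → K} {c : ι → k}
    (h : ∀ a ∈ s, HasValueAt φ (x a) (c a)) :
    HasValueAt φ (∑ a ∈ s, x a) (∑ a ∈ s, c a) := by
  induction s using Finset.cons_induction with
  | empty => simpa using hasValueAt_zero
  | cons a s ha ih =>
    rw [Finset.sum_cons, Finset.sum_cons]
    exact (h a (Finset.mem_cons_self a s)).add (ih fun b hb => h b (Finset.mem_cons_of_mem hb))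

lemma ne [IsFractionRing R K] (hx : HasValueAt φ x c) (hy : HasValueAt φ y d) (hcd : c ≠ d) :
    x ≠ y := by
  obtain ⟨p, q, hq, rfl, hpq⟩ := hx
  obtain ⟨p', q', hq', rfl, hpq'⟩ := hy
  intro h
  rw [div_eq_div_iff (algebraMap_ne_zero_of_map_ne_zero hq)
      (algebraMap_ne_zero_of_map_ne_zero hq'), ← map_mul, ← map_mul] at h
  have h' := congrArg φ (IsFractionRing.injective R K h)
  simp only [map_mul, hpq, hpq'] at h'
  exact hcd (mul_right_cancel₀ (mul_ne_zero hq hq') (by linear_combination h'))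

lemma ne_zero [IsFractionRing R K] (hx : HasValueAt φ x c) (hc : c ≠ 0) : x ≠ 0 :=
  hx.ne hasValueAt_zero hc

end HasValueAt

end FractionRingValue

section QuadraticExtension

open Submodule IntermediateField

variable {F L : Type*} [Field F] [Field L] [Algebra F L] {K : IntermediateField F L} {y : L}

lemma mul_mem_of_mem_intermediateField {p : Submodule K L} {a x : L} (ha : a ∈ K) (hx : x ∈ p) :
    a * x ∈ p :=
  p.smul_mem (⟨a, ha⟩ : K) hx

lemma mul_self_mem_span_of_mul_mem {q : L} (hq : q ∈ span K {1, y})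
    (hyq : y * q ∈ span K {1, y}) (hqK : q ∉ K) : y * y ∈ span K {1, y} := by
  obtain ⟨a, b, rfl⟩ := mem_span_pair.1 hq
  have hb : b ≠ 0 := by
    rintro rfl
    exact hqK (by simp [IntermediateField.smul_def])
  have hyy : y * y = b⁻¹ • (y * (a • 1 + b • y) - a • y) := by
    rw [eq_inv_smul_iff₀ hb]
    simp only [IntermediateField.smul_def, smul_eq_mul]
    ring
  rw [hyy]
  exact smul_mem _ _ (sub_mem hyq (smul_mem _ _ (subset_span (by simp))))

lemma span_one_self_eq_top (hy : y * y ∈ span K {1, y}) (htop : K⟮y⟯ = ⊤) :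
    span K ({1, y} : Set L) = ⊤ := by
  have hone : (1 : L) ∈ span K {1, y} := subset_span (by simp)
  have hy1 : y ∈ span K {1, y} := subset_span (by simp)
  have hmul : ∀ a b, a ∈ span K {1, y} → b ∈ span K {1, y} → a * b ∈ span K {1, y} := by
    intro a b ha hb
    have hab := Submodule.mul_mem_mul ha hb
    rw [span_mul_span] at hab
    refine span_le.2 ?_ hab
    rintro _ ⟨u, hu, v, hv, rfl⟩
    rcases hu with rfl | rfl <;> rcases hv with rfl | rfl
    · simpa using hone
    · simpa using hy1
    · simpa using hy1
    · exact hy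
  let S := (span K ({1, y} : Set L)).toSubalgebra hone hmul
  have hyS : y ∈ S := subset_span (by simp)
  have hint : IsIntegral K y := .of_mem_of_fg S (fg_span (Set.toFinite _)) y hyS
  rw [eq_top_iff]
  intro f _
  have hf : f ∈ K⟮y⟯.toSubalgebra := htop ▸ trivial
  rw [adjoin_simple_toSubalgebra_of_isAlgebraic hint.isAlgebraic] at hf
  exact Algebra.adjoin_le (Set.singleton_subset_iff.2 hyS) hf

variable {E : Type*} [FunLike E L L] [RingHomClass E L L] {σ : E} {f : L}

lemma map_eq_self_of_mem_span (hK : ∀ x ∈ K, σ x = x) (hy : σ y = y)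
    (hf : f ∈ span K {1, y}) : σ f = f := by
  obtain ⟨a, b, rfl⟩ := mem_span_pair.1 hf
  simp [IntermediateField.smul_def, hK _ a.2, hK _ b.2, hy]

lemma mem_of_map_eq_self (hK : ∀ x ∈ K, σ x = x) (hy : σ y ≠ y)
    (hf : f ∈ span K {1, y}) (hσf : σ f = f) : f ∈ K := by
  obtain ⟨a, b, rfl⟩ := mem_span_pair.1 hf
  have hb : (b : L) * (σ y - y) = 0 := by
    simp only [IntermediateField.smul_def, smul_eq_mul, map_add, map_mul, map_one, hK _ a.2,
      hK _ b.2] at hσf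
    linear_combination hσf
  rw [mul_eq_zero, sub_eq_zero, or_iff_left hy] at hb
  simp [IntermediateField.smul_def, hb]

end QuadraticExtension

lemma IntermediateField.eq_top_of_algebraMap_X_mem {ι k L : Type*} [Field k] [Field L]
    [Algebra k L] [Algebra (MvPolynomial ι k) L] [IsScalarTower k (MvPolynomial ι k) L]
    [IsFractionRing (MvPolynomial ι k) L] {E : IntermediateField k L}
    (h : ∀ s, algebraMap (MvPolynomial ι k) L (MvPolynomial.X s) ∈ E) : E = ⊤ := by
  have hpoly : ∀ p, algebraMap (MvPolynomial ι k) L p ∈ E := by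
    have hle : Algebra.adjoin k (Set.range MvPolynomial.X) ≤
        E.toSubalgebra.comap (IsScalarTower.toAlgHom k (MvPolynomial ι k) L) :=
      Algebra.adjoin_le (by rintro _ ⟨s, rfl⟩; exact h s)
    rw [MvPolynomial.adjoin_range_X] at hle
    exact fun p => hle trivial
  rw [eq_top_iff]
  intro f _
  obtain ⟨p, q, -, rfl⟩ := IsFractionRing.div_surjective (A := MvPolynomial ι k) f
  exact div_mem (hpoly p) (hpoly q)

lemma prod_range_natCast_zmod {M : Type*} [CommMonoid M] {m : ℕ} [NeZero m] (g : ZMod m → M) :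
    ∏ k ∈ Finset.range m, g k = ∏ c, g c := by
  refine Finset.prod_nbij' (fun k => (k : ZMod m)) (fun c => c.val) (fun _ _ => Finset.mem_univ _)
    (fun c _ => Finset.mem_range.2 (ZMod.val_lt c)) (fun k hk => ?_)
    (fun c _ => ZMod.natCast_zmod_val c) (fun _ _ => rfl)
  exact ZMod.val_cast_of_lt (Finset.mem_range.1 hk)

lemma mul_sum_prod_sub_one {R : Type*} [CommRing R] {m : ℕ} [NeZero m] (x : ZMod m → R)
    (n : ZMod m) :
    x n * ∑ k ∈ Finset.range m, ∏ j ∈ Finset.range k, x (n - 1 - j) =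
      ∑ k ∈ Finset.range m, ∏ j ∈ Finset.range k, x (n - j) - 1 + ∏ c, x c := by
  have hshift : ∀ k, x n * ∏ j ∈ Finset.range k, x (n - 1 - j) =
      ∏ j ∈ Finset.range (k + 1), x (n - j) := by
    intro k
    rw [Finset.prod_range_succ', mul_comm]
    congr 1
    · exact Finset.prod_congr rfl fun j _ => by push_cast; ring_nf
    · simp
  have hcycle : ∏ j ∈ Finset.range m, x (n - j) = ∏ c, x c := by
    rw [prod_range_natCast_zmod (fun c => x (n - c))]
    exact Equiv.prod_comp (Equiv.subLeft n) x
  rw [Finset.mul_sum, Finset.sum_congr rfl fun k _ => hshift k, ← hcycle]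
  have := Finset.sum_range_succ' (fun k => ∏ j ∈ Finset.range k, x (n - j)) m
  rw [Finset.sum_range_succ, Finset.prod_range_zero] at this
  linear_combination -this

section Specialization

variable {ℓ A}

def evalPoint (i : Fin ℓ) (a : ℂ) : Fin ℓ × ZMod m → ℂ :=
  fun s => if s.1 = i then a else 1

variable {m} {i : Fin ℓ} {a : ℂ}

omit [NeZero m] in
lemma hasValueAt_yv (j : Fin ℓ) (n : ZMod m) :
    HasValueAt (MvPolynomial.eval (evalPoint m i a)) (yv ℓ m j n) (evalPoint m i a (j, n)) := by
  have h := hasValueAt_algebraMap (K := Ly ℓ m) (φ := MvPolynomial.eval (evalPoint m i a))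
    (MvPolynomial.X (j, n))
  rwa [MvPolynomial.eval_X] at h

omit [NeZero m] in
lemma hasValueAt_Fv (n : ZMod m) :
    HasValueAt (MvPolynomial.eval (evalPoint m i a)) (Fv ℓ m A i n) 1 := by
  have h : ∀ j : Fin ℓ, j ≠ i → ∀ n : ZMod m,
      HasValueAt (MvPolynomial.eval (evalPoint m i a)) (yv ℓ m j n) 1 := fun j hj n => by
    simpa [evalPoint, hj] using hasValueAt_yv (i := i) (a := a) j n
  rw [Fv]
  simpa using (HasValueAt.prod fun j hj => h j (Finset.mem_filter.1 hj).2.1.ne _).mul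
    (HasValueAt.prod fun j hj => h j (Finset.mem_filter.1 hj).2.1.ne' n)

omit [NeZero m] in
lemma hasValueAt_Xv (ha : a ≠ 0) (n : ZMod m) :
    HasValueAt (MvPolynomial.eval (evalPoint m i a)) (Xv ℓ m A i n) (1 / (a * a)) := by
  have hy : ∀ n : ZMod m, HasValueAt (MvPolynomial.eval (evalPoint m i a)) (yv ℓ m i n) a :=
    fun n => by simpa [evalPoint] using hasValueAt_yv (i := i) (a := a) i n
  exact (hasValueAt_Fv n).div ((hy n).mul (hy (n + 1))) (mul_ne_zero ha ha)

omit [NeZero m] in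
lemma yv_ne_zero (j : Fin ℓ) (n : ZMod m) : yv ℓ m j n ≠ 0 :=
  (hasValueAt_yv (i := j) (a := 1) j n).ne_zero (by simp [evalPoint])

omit [NeZero m] in
lemma Xv_ne_zero (n : ZMod m) : Xv ℓ m A i n ≠ 0 :=
  (hasValueAt_Xv (A := A) one_ne_zero n).ne_zero (by simp)

lemma Pv_eq_sum (n : ZMod m) :
    Pv ℓ m A i n = ∑ k ∈ Finset.range m, ∏ j ∈ Finset.range k, Xv ℓ m A i (n - j) := by
  have hm : Finset.range m = Finset.range (m - 1 + 1) := by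
    rw [Nat.sub_add_cancel NeZero.one_le]
  rw [Pv, hm, Finset.sum_range_succ', Finset.prod_range_zero, add_comm]

lemma Pv_ne_zero (n : ZMod m) : Pv ℓ m A i n ≠ 0 := by
  have hX (j : ℕ) := hasValueAt_Xv (A := A) (i := i) one_ne_zero (n - (j : ZMod m))
  have h := HasValueAt.sum fun k (_ : k ∈ Finset.range m) =>
    HasValueAt.prod fun j (_ : j ∈ Finset.range k) => hX j
  rw [← Pv_eq_sum] at h
  exact h.ne_zero (by simpa using NeZero.ne m)

lemma prod_Xv_ne_one : ∏ c : ZMod m, Xv ℓ m A i c ≠ 1 := by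
  have h := HasValueAt.prod fun (c : ZMod m) (_ : c ∈ Finset.univ) =>
    hasValueAt_Xv (A := A) (i := i) (a := 2) two_ne_zero c
  refine h.ne hasValueAt_one ?_
  rw [Finset.prod_const, Finset.card_univ, ZMod.card, one_div, inv_pow, inv_ne_one]
  norm_num
  exact_mod_cast (Nat.one_lt_pow (NeZero.ne m) (by norm_num : 1 < 4)).ne'

end Specialization

section CyclicRecurrence

variable {ℓ m A} {i : Fin ℓ}

lemma Pv_sub_two_mul_Xv_add_Pv (n : ZMod m) :
    Pv ℓ m A i (n - 2) * Xv ℓ m A i (n - 1) + Pv ℓ m A i n =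
      Pv ℓ m A i (n - 1) * (1 + Xv ℓ m A i n) := by
  have h := mul_sum_prod_sub_one (Xv ℓ m A i)
  have h₁ := h (n - 1)
  rw [sub_sub, one_add_one_eq_two] at h₁
  simp only [← Pv_eq_sum] at h h₁
  linear_combination h₁ - h n

omit [NeZero m] in
lemma zv_sub_yv (n : ZMod m) : zv ℓ m A i n - yv ℓ m i n = yv ℓ m i n * Xv ℓ m A i n := by
  rw [zv]
  ring

omit [NeZero m] in
lemma yv_mul_Xv_mul_yv_add_one (n : ZMod m) :
    yv ℓ m i n * Xv ℓ m A i n * yv ℓ m i (n + 1) = Fv ℓ m A i n := by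
  have := yv_ne_zero i n
  have := yv_ne_zero i (n + 1)
  rw [Xv]
  field_simp

omit [NeZero m] in
lemma zv_mem_Zfield (n : ZMod m) : zv ℓ m A i n ∈ Zfield ℓ m A i :=
  IntermediateField.subset_adjoin _ _ (Or.inl ⟨n, rfl⟩)

omit [NeZero m] in
lemma yv_mem_Zfield {j : Fin ℓ} (hj : j ≠ i) (n : ZMod m) : yv ℓ m j n ∈ Zfield ℓ m A i :=
  IntermediateField.subset_adjoin _ _ (Or.inr ⟨j, n, hj, rfl⟩)

omit [NeZero m] in
lemma Fv_mem_Zfield (n : ZMod m) : Fv ℓ m A i n ∈ Zfield ℓ m A i :=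
  mul_mem (prod_mem fun _ hj => yv_mem_Zfield (Finset.mem_filter.1 hj).2.1.ne _)
    (prod_mem fun _ hj => yv_mem_Zfield (Finset.mem_filter.1 hj).2.1.ne' _)

omit [NeZero m] in
open Submodule in
/-- Iterating `y_i(k + 1) = F_i(k) / (z_i(k) - y_i(k))` writes `y_i(k)` as a quotient of two
elements of `𝒵 + 𝒵 y_i(0)`. -/
lemma prod_zv_sub_yv_mem_span (k : ℕ) :
    ∏ j ∈ Finset.range k, (zv ℓ m A i j - yv ℓ m i j) ∈
        span (Zfield ℓ m A i) {1, yv ℓ m i 0} ∧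
      yv ℓ m i k * ∏ j ∈ Finset.range k, (zv ℓ m A i j - yv ℓ m i j) ∈
        span (Zfield ℓ m A i) {1, yv ℓ m i 0} := by
  induction k with
  | zero => exact ⟨subset_span (by simp), subset_span (by simp)⟩
  | succ k ih =>
    set q := ∏ j ∈ Finset.range k, (zv ℓ m A i j - yv ℓ m i j)
    rw [Finset.prod_range_succ]
    constructor
    · rw [mul_sub, mul_comm q, mul_comm q]
      exact sub_mem (mul_mem_of_mem_intermediateField (zv_mem_Zfield (k : ZMod m)) ih.1) ih.2
    · have hF :
          yv ℓ m i (k + 1 : ℕ) * (q * (zv ℓ m A i k - yv ℓ m i k)) = Fv ℓ m A i k * q := by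
        rw [zv_sub_yv, Nat.cast_succ, ← yv_mul_Xv_mul_yv_add_one]
        ring
      rw [hF]
      exact mul_mem_of_mem_intermediateField (Fv_mem_Zfield (k : ZMod m)) ih.1

open IntermediateField in
lemma adjoin_yv_zero_eq_top : (Zfield ℓ m A i)⟮yv ℓ m i 0⟯ = ⊤ := by
  set E := (Zfield ℓ m A i)⟮yv ℓ m i 0⟯
  have hZ : ∀ x ∈ Zfield ℓ m A i, x ∈ E := fun x hx =>
    E.algebraMap_mem (⟨x, hx⟩ : Zfield ℓ m A i)
  have hi : ∀ k : ℕ, yv ℓ m i k ∈ E := by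
    intro k
    induction k with
    | zero => simpa using mem_adjoin_simple_self (Zfield ℓ m A i) (yv ℓ m i 0)
    | succ k ih =>
      have hrec : yv ℓ m i (k + 1 : ℕ) = Fv ℓ m A i k / (zv ℓ m A i k - yv ℓ m i k) := by
        rw [eq_div_iff, zv_sub_yv, Nat.cast_succ, ← yv_mul_Xv_mul_yv_add_one]
        · ring
        · rw [zv_sub_yv]
          exact mul_ne_zero (yv_ne_zero i (k : ZMod m)) (Xv_ne_zero (k : ZMod m))
      rw [hrec]
      exact div_mem (hZ _ (Fv_mem_Zfield (k : ZMod m)))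
        (sub_mem (hZ _ (zv_mem_Zfield (k : ZMod m))) ih)
  rw [← IntermediateField.restrictScalars_eq_top_iff (K := ℂ)]
  refine IntermediateField.eq_top_of_algebraMap_X_mem (ι := Fin ℓ × ZMod m) ?_
  rintro ⟨j, n⟩
  by_cases hj : j = i
  · subst hj
    simpa [yv] using hi n.val
  · exact hZ _ (yv_mem_Zfield hj n)

end CyclicRecurrence

section Reflection

variable {ℓ m A} {i : Fin ℓ} {σ : Ly ℓ m ≃ₐ[ℂ] Ly ℓ m}
  (hσ : ∀ n, σ (yv ℓ m i n) =
    Pv ℓ m A i (n - 2) / Pv ℓ m A i (n - 1) * (yv ℓ m i n * Xv ℓ m A i (n - 1)))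
  (hσ' : ∀ j n, j ≠ i → σ (yv ℓ m j n) = yv ℓ m j n)

include hσ' in
omit [NeZero m] in
lemma map_Fv (n : ZMod m) : σ (Fv ℓ m A i n) = Fv ℓ m A i n := by
  rw [Fv, map_mul, map_prod, map_prod]
  congr 1
  · exact Finset.prod_congr rfl fun j hj => hσ' j _ (Finset.mem_filter.1 hj).2.1.ne
  · exact Finset.prod_congr rfl fun j hj => hσ' j _ (Finset.mem_filter.1 hj).2.1.ne'

include hσ hσ'

lemma map_yv_mul_Xv (n : ZMod m) :
    σ (yv ℓ m i n * Xv ℓ m A i n) = yv ℓ m i n * Pv ℓ m A i n / Pv ℓ m A i (n - 1) := by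
  have hF := yv_mul_Xv_mul_yv_add_one (A := A) (i := i) n
  have hy := yv_ne_zero i (n + 1)
  have hyX : yv ℓ m i n * Xv ℓ m A i n = Fv ℓ m A i n / yv ℓ m i (n + 1) := by
    rw [eq_div_iff hy, hF]
  have hX := Xv_ne_zero (A := A) (i := i) n
  have hP := Pv_ne_zero (A := A) (i := i) n
  have hP' := Pv_ne_zero (A := A) (i := i) (n - 1)
  rw [hyX, map_div₀, map_Fv hσ', hσ, add_sub_cancel_right, show n + 1 - 2 = n - 1 by ring,
    ← hF]
  field_simp

lemma map_zv (n : ZMod m) : σ (zv ℓ m A i n) = zv ℓ m A i n := by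
  have hP := Pv_ne_zero (A := A) (i := i) (n - 1)
  rw [zv, mul_one_add, map_add, map_yv_mul_Xv hσ hσ', hσ]
  field_simp
  linear_combination yv ℓ m i n * Pv_sub_two_mul_Xv_add_Pv (A := A) (i := i) n

lemma map_eq_self_of_mem_Zfield {x : Ly ℓ m} (hx : x ∈ Zfield ℓ m A i) : σ x = x := by
  have hle : (Zfield ℓ m A i).toSubfield ≤
      (σ : Ly ℓ m →+* Ly ℓ m).eqLocusField (RingHom.id _) := by
    rw [Zfield, IntermediateField.adjoin_toSubfield, Subfield.closure_le]
    rintro _ (⟨c, rfl⟩ | ⟨n, rfl⟩ | ⟨j, n, hj, rfl⟩)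
    · exact σ.commutes c
    · exact map_zv hσ hσ' n
    · exact hσ' j n hj
  exact hle hx

/-- `σ` maps `∏ₙ y_i(n) X_i(n)` to `∏ₙ y_i(n)`, and `∏ₙ X_i(n) ≠ 1`. -/
lemma map_prod_yv_mul_Xv_ne :
    σ (∏ c : ZMod m, yv ℓ m i c * Xv ℓ m A i c) ≠
      ∏ c : ZMod m, yv ℓ m i c * Xv ℓ m A i c := by
  have hP : ∏ c : ZMod m, Pv ℓ m A i (c - 1) = ∏ c : ZMod m, Pv ℓ m A i c :=
    Equiv.prod_comp (Equiv.subRight 1) _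
  rw [map_prod, Finset.prod_congr rfl fun c _ => map_yv_mul_Xv hσ hσ' c,
    Finset.prod_div_distrib, Finset.prod_mul_distrib, Finset.prod_mul_distrib, hP,
    mul_div_assoc, div_self (Finset.prod_ne_zero_iff.2 fun c _ => Pv_ne_zero c), mul_one, Ne,
    left_eq_mul₀ (Finset.prod_ne_zero_iff.2 fun c _ => yv_ne_zero i c)]
  exact prod_Xv_ne_one

lemma mem_Zfield_of_map_eq_self {f : Ly ℓ m} (hf : σ f = f) : f ∈ Zfield ℓ m A i := by
  have hK : ∀ x ∈ Zfield ℓ m A i, σ x = x := fun x => map_eq_self_of_mem_Zfield hσ hσ'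
  have hcycle : ∏ j ∈ Finset.range m, (zv ℓ m A i j - yv ℓ m i j) =
      ∏ c : ZMod m, yv ℓ m i c * Xv ℓ m A i c := by
    simp only [zv_sub_yv]
    exact prod_range_natCast_zmod (fun c => yv ℓ m i c * Xv ℓ m A i c)
  obtain ⟨hq, hyq⟩ := prod_zv_sub_yv_mem_span (A := A) (i := i) m
  rw [ZMod.natCast_self, hcycle] at hyq
  rw [hcycle] at hq
  have hqK : ∏ c : ZMod m, yv ℓ m i c * Xv ℓ m A i c ∉ Zfield ℓ m A i := fun h =>
    map_prod_yv_mul_Xv_ne hσ hσ' (hK _ h)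
  have hspan := span_one_self_eq_top (mul_self_mem_span_of_mul_mem hq hyq hqK)
    adjoin_yv_zero_eq_top
  have hy : σ (yv ℓ m i 0) ≠ yv ℓ m i 0 := fun h => map_prod_yv_mul_Xv_ne hσ hσ'
    (map_eq_self_of_mem_span hK h (hspan ▸ Submodule.mem_top))
  exact mem_of_map_eq_self hK hy (hspan ▸ Submodule.mem_top) hf

end Reflection

theorem stmt_0
    (r : Fin ℓ → (Ly ℓ m ≃ₐ[ℂ] Ly ℓ m))
    (hr : ∀ i n, r i (yv ℓ m i n) =
      Pv ℓ m A i (n - 2) / Pv ℓ m A i (n - 1) * (yv ℓ m i n * Xv ℓ m A i (n - 1)))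
    (hr' : ∀ i j n, j ≠ i → r i (yv ℓ m j n) = yv ℓ m j n) :
    (∀ i, {f : Ly ℓ m | r i f = f} = (Zfield ℓ m A i : Set (Ly ℓ m))) ∧
      (⋂ i, {f : Ly ℓ m | r i f = f}) = ⋂ i, (Zfield ℓ m A i : Set (Ly ℓ m)) := by
  have fixed_eq : ∀ i, {f : Ly ℓ m | r i f = f} = (Zfield ℓ m A i : Set (Ly ℓ m)) :=
    fun i => Set.ext fun _ => ⟨mem_Zfield_of_map_eq_self (hr i) (hr' i),
      map_eq_self_of_mem_Zfield (hr i) (hr' i)⟩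
  exact ⟨fixed_eq, Set.iInter_congr fixed_eq⟩
end
end

section
/- Suppose that for each $s \in \{1,\dots,c\}$ a $K$-algebra endomorphism $\sigma_s$ of $L$ satisfying the reflection formula at $s$ is given. Then for any $s, s' \in \{1,\dots,c\}$ with $s \neq s'$: (1) $\sigma_s \circ \sigma_{s'} = \sigma_{s'} \circ \sigma_s$ as maps $L \to L$; and (2) $\sigma_s(\delta_{s'}) = \delta_{s'}$. -/
/- Setting: `K` a field of characteristic zero, `c ≥ 1`, `m ≥ 2`; `Lc K c m` is the field of
fractions of the (Laurent) polynomial ring over `K` in commuting variables `yc n` indexed by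
`n : ZMod (c*m)`, with fixed scalars `F n : K`. -/

noncomputable section

open scoped Classical

variable (K : Type) [Field K] (c m : ℕ) [NeZero (c * m)]

/-- The ambient field `L`. -/
abbrev Lc := FractionRing (MvPolynomial (ZMod (c * m)) K)

/-- The variable `y_n`. -/
def yc (n : ZMod (c * m)) : Lc K c m :=
  algebraMap (MvPolynomial (ZMod (c * m)) K) (Lc K c m) (MvPolynomial.X n)

variable (F : ZMod (c * m) → K)

/-- The scalar `F_n` viewed inside `L`. -/
def Fcc (n : ZMod (c * m)) : Lc K c m := algebraMap K (Lc K c m) (F n)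

/-- `X_n = F_n / (y_n y_{n+c})`. -/
def Xc (n : ZMod (c * m)) : Lc K c m :=
  Fcc K c m F n / (yc K c m n * yc K c m (n + (c : ZMod (c * m))))

/-- `P_n = 1 + ∑_{k=0}^{m-2} X_n X_{n-c} ⋯ X_{n-kc}`. -/
def Pc (n : ZMod (c * m)) : Lc K c m :=
  1 + ∑ k ∈ Finset.range (m - 1),
    ∏ j ∈ Finset.range (k + 1), Xc K c m F (n - ((j * c : ℕ) : ZMod (c * m)))

/-- `z_n = y_n (1 + X_n)`. -/
def zc (n : ZMod (c * m)) : Lc K c m := yc K c m n * (1 + Xc K c m F n)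

/-- `N_s ⊆ ℤ/cmℤ`, the image of `cℤ + (s-1)`. -/
def Ns (s : ℕ) : Set (ZMod (c * m)) :=
  {n | ∃ t : ℤ, n = ((t * c + s - 1 : ℤ) : ZMod (c * m))}

/-- `∏_{n ∈ N_s} y_n`. -/
def boldyc (s : ℕ) : Lc K c m :=
  ∏ n : ZMod (c * m), if n ∈ Ns c m s then yc K c m n else 1

/-- `∏_{n ∈ N_s} F_n` (viewed in `L`). -/
def boldFc (s : ℕ) : Lc K c m :=
  ∏ n : ZMod (c * m), if n ∈ Ns c m s then Fcc K c m F n else 1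

/-- `δ_s = ∏_{n ∈ N_s} y_n - (∏_{n ∈ N_s} F_n)/(∏_{n ∈ N_s} y_n)`. -/
def deltac (s : ℕ) : Lc K c m :=
  boldyc K c m s - boldFc K c m F s / boldyc K c m s

/-- A `K`-algebra endomorphism `σ` of `L` satisfies the reflection formula at `s` if
`σ(y_n) = (P_{n-2c}/P_{n-c})·(F_{n-c}/y_{n-c})` for `n ∈ N_s` and `σ(y_n) = y_n` for `n ∉ N_s`. -/
def ReflFormula (σ : Lc K c m →ₐ[K] Lc K c m) (s : ℕ) : Prop :=
  (∀ n ∈ Ns c m s,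
      σ (yc K c m n) =
        Pc K c m F (n - ((2 * c : ℕ) : ZMod (c * m))) / Pc K c m F (n - ((c : ℕ) : ZMod (c * m))) *
          (Fcc K c m F (n - ((c : ℕ) : ZMod (c * m))) / yc K c m (n - ((c : ℕ) : ZMod (c * m))))) ∧
    ∀ n : ZMod (c * m), n ∉ Ns c m s → σ (yc K c m n) = yc K c m n


set_option synthInstance.maxHeartbeats 1000000
set_option maxHeartbeats 1000000
set_option linter.unusedSectionVars false

lemma Ns_shift (s : ℕ) {n : ZMod (c * m)} (h : n ∈ Ns c m s) (k : ℕ) :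
    n - ((k * c : ℕ) : ZMod (c * m)) ∈ Ns c m s := by
  obtain ⟨t, ht⟩ := h
  refine ⟨t - k, ?_⟩
  rw [ht]; push_cast; ring

lemma Ns_addc (s : ℕ) {n : ZMod (c * m)} (h : n ∈ Ns c m s) :
    n + ((c : ℕ) : ZMod (c * m)) ∈ Ns c m s := by
  obtain ⟨t, ht⟩ := h
  refine ⟨t + 1, ?_⟩
  rw [ht]; push_cast; ring

lemma Ns_disj {s s' : ℕ} (hs : 1 ≤ s) (hsc : s ≤ c) (hs' : 1 ≤ s') (hs'c : s' ≤ c)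
    (hne : s ≠ s') {n : ZMod (c * m)} (h : n ∈ Ns c m s) : n ∉ Ns c m s' := by
  rintro ⟨t', ht'⟩
  obtain ⟨t, ht⟩ := h
  rw [ht, ZMod.intCast_eq_intCast_iff_dvd_sub] at ht'
  have hcd : (c : ℤ) ∣ ((t' * c + s' - 1) - (t * c + s - 1)) := by
    refine dvd_trans ⟨m, by push_cast; ring⟩ ht'
  have h2 : (c : ℤ) ∣ ((s' : ℤ) - s) := by
    have h3 : ((s' : ℤ) - s) = ((t' * c + s' - 1) - (t * c + s - 1)) - (t' - t) * c := by ring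
    rw [h3]
    exact dvd_sub hcd ⟨t' - t, by ring⟩
  have hne' : ((s' : ℤ) - s) ≠ 0 := by
    intro h0; apply hne; omega
  have habs : |((s' : ℤ) - s)| < c := by
    rw [abs_lt]; constructor <;> omega
  have h4 : (c : ℤ) ≤ |((s' : ℤ) - s)| :=
    Int.le_of_dvd (abs_pos.mpr hne') ((dvd_abs _ _).mpr h2)
  exact absurd h4 (not_le.mpr habs)

lemma fix_Xc (σ' : Lc K c m →ₐ[K] Lc K c m) (s : ℕ)
    (hfix : ∀ r ∈ Ns c m s, σ' (yc K c m r) = yc K c m r)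
    {q : ZMod (c * m)} (hq : q ∈ Ns c m s) :
    σ' (Xc K c m F q) = Xc K c m F q := by
  simp only [Xc, Fcc]
  rw [map_div₀, map_mul, hfix q hq, hfix _ (Ns_addc c m s hq), AlgHom.commutes]

lemma fix_Pc (σ' : Lc K c m →ₐ[K] Lc K c m) (s : ℕ)
    (hfix : ∀ r ∈ Ns c m s, σ' (yc K c m r) = yc K c m r)
    {q : ZMod (c * m)} (hq : q ∈ Ns c m s) :
    σ' (Pc K c m F q) = Pc K c m F q := by
  simp only [Pc, map_add, map_one, map_sum, map_prod]
  congr 1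
  refine Finset.sum_congr rfl fun k _ => Finset.prod_congr rfl fun j _ => ?_
  exact fix_Xc K c m F σ' s hfix (Ns_shift c m s hq j)

lemma fix_refl (σ σ' : Lc K c m →ₐ[K] Lc K c m) (s : ℕ)
    (hσ : ReflFormula K c m F σ s)
    (hfix : ∀ r ∈ Ns c m s, σ' (yc K c m r) = yc K c m r)
    {n : ZMod (c * m)} (hn : n ∈ Ns c m s) :
    σ' (σ (yc K c m n)) = σ (yc K c m n) := by
  have h1 : n - ((c : ℕ) : ZMod (c * m)) ∈ Ns c m s := by
    simpa using Ns_shift c m s hn 1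
  have h2 : n - ((2 * c : ℕ) : ZMod (c * m)) ∈ Ns c m s := Ns_shift c m s hn 2
  rw [hσ.1 n hn, map_mul, map_div₀, map_div₀, fix_Pc K c m F σ' s hfix h2,
    fix_Pc K c m F σ' s hfix h1, hfix _ h1]
  simp only [Fcc, AlgHom.commutes]

/-- if for each `s ∈ {1,…,c}` a `K`-algebra endomorphism `σ_s` of `L` satisfying the
reflection formula at `s` is given, then for `s ≠ s'` in `{1,…,c}`: (1) `σ_s ∘ σ_{s'} = σ_{s'} ∘ σ_s`;
(2) `σ_s(δ_{s'}) = δ_{s'}`. -/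
theorem stmt_9 [CharZero K] (hc : 1 ≤ c) (hm : 2 ≤ m) (hF : ∀ n, F n ≠ 0)
    (σs : ℕ → (Lc K c m →ₐ[K] Lc K c m))
    (hσ : ∀ s, 1 ≤ s → s ≤ c → ReflFormula K c m F (σs s) s) :
    ∀ s s', 1 ≤ s → s ≤ c → 1 ≤ s' → s' ≤ c → s ≠ s' →
      (σs s).comp (σs s') = (σs s').comp (σs s) ∧
        σs s (deltac K c m F s') = deltac K c m F s' := by
  intro s s' hs1 hsc hs'1 hs'c hne
  have Hs := hσ s hs1 hsc
  have Hs' := hσ s' hs'1 hs'c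
  have hfix_s'_on_s : ∀ r ∈ Ns c m s, σs s' (yc K c m r) = yc K c m r :=
    fun r hr => Hs'.2 r (Ns_disj c m hs1 hsc hs'1 hs'c hne hr)
  have hfix_s_on_s' : ∀ r ∈ Ns c m s', σs s (yc K c m r) = yc K c m r :=
    fun r hr => Hs.2 r (Ns_disj c m hs'1 hs'c hs1 hsc (Ne.symm hne) hr)
  constructor
  · apply AlgHom.coe_ringHom_injective
    apply IsLocalization.ringHom_ext (nonZeroDivisors (MvPolynomial (ZMod (c * m)) K))
    apply MvPolynomial.ringHom_ext
    · intro r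
      show σs s (σs s' (algebraMap _ _ (MvPolynomial.C r))) =
        σs s' (σs s (algebraMap _ _ (MvPolynomial.C r)))
      have hC : algebraMap (MvPolynomial (ZMod (c * m)) K) (Lc K c m) (MvPolynomial.C r)
          = algebraMap K (Lc K c m) r := by
        rw [← MvPolynomial.algebraMap_eq, ← IsScalarTower.algebraMap_apply]
      rw [hC]; simp only [AlgHom.commutes]
    · intro i
      show σs s (σs s' (yc K c m i)) = σs s' (σs s (yc K c m i))
      by_cases hn : i ∈ Ns c m s
      · rw [hfix_s'_on_s i hn, fix_refl K c m F (σs s) (σs s') s Hs hfix_s'_on_s hn]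
      · by_cases hn' : i ∈ Ns c m s'
        · rw [hfix_s_on_s' i hn', fix_refl K c m F (σs s') (σs s) s' Hs' hfix_s_on_s' hn']
        · rw [Hs'.2 i hn', Hs.2 i hn, Hs'.2 i hn']
  · have hy : σs s (boldyc K c m s') = boldyc K c m s' := by
      simp only [boldyc, map_prod]
      refine Finset.prod_congr rfl fun n _ => ?_
      rw [apply_ite (σs s), map_one]
      by_cases h : n ∈ Ns c m s'
      · simp [h, hfix_s_on_s' n h]
      · simp [h]
    have hFb : σs s (boldFc K c m F s') = boldFc K c m F s' := by
      simp only [boldFc, map_prod]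
      refine Finset.prod_congr rfl fun n _ => ?_
      rw [apply_ite (σs s), map_one]
      simp only [Fcc, AlgHom.commutes]
    simp only [deltac, map_sub, map_div₀, hy, hFb]
end
end

section
/- The family $(\tilde z_n)_{n \in \mathbb{Z}}$, where $\tilde z_n = \tilde y_n + F_n \tilde y_{n+1}^{-1}$, is algebraically independent over $K$. -/
/- Setting: `Yinf K` is the Laurent polynomial ring over the field `K` in commuting variables
`ỹ_n` indexed by `n : ℤ` (realized as the monoid algebra of `ℤ →₀ ℤ`), with fixed nonzero
scalars `F n : K`. -/

noncomputable section

variable (K : Type) [Field K] (F : ℤ → K)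

/-- The Laurent polynomial ring `𝒴_∞ = K[ỹ_n^{±1} ; n ∈ ℤ]`. -/
abbrev Yinf := AddMonoidAlgebra K (ℤ →₀ ℤ)

/-- The variable `ỹ_n`. -/
def yt (n : ℤ) : Yinf K := AddMonoidAlgebra.single (Finsupp.single n (1 : ℤ)) (1 : K)

/-- The inverse variable `ỹ_n⁻¹`. -/
def ytinv (n : ℤ) : Yinf K := AddMonoidAlgebra.single (Finsupp.single n (-1 : ℤ)) (1 : K)

/-- `z̃_n = ỹ_n + F_n ỹ_{n+1}⁻¹`. -/
def zt (n : ℤ) : Yinf K := yt K n + algebraMap K (Yinf K) (F n) * ytinv K (n + 1)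

/-
Order the exponents `ℤ →₀ ℤ` lexicographically, index `n` being more significant than `n + 1`.
The leading term of `z̃_n = ỹ_n + F_n ỹ_{n+1}⁻¹` is then `ỹ_n`: the exponents of `ỹ_n` and
`ỹ_{n+1}⁻¹` first differ at index `n`, where they are `1` and `0`. Leading terms are
multiplicative, so the monomial `∏ z̃_n ^ m_n` has leading term `∏ ỹ_n ^ m_n`. Distinct monomials
in the `z̃_n` thus have distinct leading exponents, so they are linearly independent over `K`,
which is algebraic independence.
-/

namespace AddMonoidAlgebra

variable {R A B : Type*}

section Semiring

variable [Semiring R] [LinearOrder B] {D : A → B}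

variable (D) in
def HasLeadingTerm (p : R[A]) (a : A) (c : R) : Prop :=
  p.coeff a = c ∧ ∀ b ∈ p.coeff.support, b ≠ a → D b < D a

theorem HasLeadingTerm.le_of_mem_support {p : R[A]} {a : A} {c : R}
    (h : HasLeadingTerm D p a c) {b : A} (hb : b ∈ p.coeff.support) : D b ≤ D a := by
  rcases eq_or_ne b a with rfl | hne
  · exact le_rfl
  · exact (h.2 b hb hne).le

theorem hasLeadingTerm_single (a : A) (c : R) : HasLeadingTerm D (single a c) a c :=
  ⟨Finsupp.single_eq_same, fun _ hb hne => absurd (Finset.mem_singleton.1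
    (Finsupp.support_single_subset hb)) hne⟩

theorem hasLeadingTerm_single_add_single {a b : A} (hab : D b < D a) (c c' : R) :
    HasLeadingTerm D (single a c + single b c') a c := by
  have hba : b ≠ a := fun h => hab.ne (congrArg D h)
  refine ⟨by simp [coeff_add, coeff_single, Finsupp.single_eq_of_ne' hba], fun x hx hxa => ?_⟩
  classical
  rcases Finset.mem_union.1 (Finsupp.support_add hx) with h | h
  · exact absurd (Finset.mem_singleton.1 (Finsupp.support_single_subset h)) hxa
  · rwa [Finset.mem_singleton.1 (Finsupp.support_single_subset h)]

section Mul

variable [Add A] [Add B] [AddLeftStrictMono B] [AddRightStrictMono B]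
  (hD : D.Injective) (hadd : ∀ a₁ a₂, D (a₁ + a₂) = D a₁ + D a₂)
include hD hadd

theorem HasLeadingTerm.mul {p q : R[A]} {a b : A} {c d : R}
    (hp : HasLeadingTerm D p a c) (hq : HasLeadingTerm D q b d) :
    HasLeadingTerm D (p * q) (a + b) (c * d) := by
  classical
  have := addLeftMono_of_addLeftStrictMono B
  have := addRightMono_of_addRightStrictMono B
  refine ⟨?_, fun x hx hne => ?_⟩
  · rw [coeff_mul_add_of_uniqueAdd fun a' b' ha' hb' he => ?_, hp.1, hq.1]
    have hsum : D a' + D b' = D a + D b := by rw [← hadd, ← hadd, he]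
    obtain ⟨ha'a, hb'b⟩ := (add_eq_add_iff_eq_and_eq (hp.le_of_mem_support ha')
      (hq.le_of_mem_support hb')).1 hsum
    exact ⟨hD ha'a, hD hb'b⟩
  · obtain ⟨a', ha', b', hb', rfl⟩ := Finset.mem_add.1 (support_coeff_mul_subset p q hx)
    refine lt_of_le_of_ne ?_ fun h => hne (hD h)
    rw [hadd, hadd]
    exact add_le_add (hp.le_of_mem_support ha') (hq.le_of_mem_support hb')

end Mul

end Semiring

section CommSemiring

variable [CommSemiring R] [AddCommMonoid A] [LinearOrder B] [AddCommMonoid B]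
  [AddLeftStrictMono B] {D : A → B}
  (hD : D.Injective) (hadd : ∀ a₁ a₂, D (a₁ + a₂) = D a₁ + D a₂)
include hD hadd

theorem HasLeadingTerm.prod {ι : Type*} {s : Finset ι} {f : ι → R[A]} {a : ι → A} {c : ι → R}
    (hf : ∀ i ∈ s, HasLeadingTerm D (f i) (a i) (c i)) :
    HasLeadingTerm D (∏ i ∈ s, f i) (∑ i ∈ s, a i) (∏ i ∈ s, c i) := by
  classical
  induction s using Finset.induction with
  | empty => simpa [one_def] using hasLeadingTerm_single (D := D) (0 : A) (1 : R)
  | insert i s hi ih =>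
    rw [Finset.prod_insert hi, Finset.sum_insert hi, Finset.prod_insert hi]
    exact (hf i (Finset.mem_insert_self i s)).mul hD hadd
      (ih fun j hj => hf j (Finset.mem_insert_of_mem hj))

theorem HasLeadingTerm.pow {p : R[A]} {a : A} {c : R} (h : HasLeadingTerm D p a c) (k : ℕ) :
    HasLeadingTerm D (p ^ k) (k • a) (c ^ k) := by
  simpa using HasLeadingTerm.prod hD hadd (s := Finset.range k) fun _ _ => h

end CommSemiring

theorem linearIndependent_of_hasLeadingTerm [Ring R] [NoZeroDivisors R] [LinearOrder B]
    {D : A → B} {ι : Type*} {f : ι → R[A]} {a : ι → A} {c : ι → R}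
    (hf : ∀ i, HasLeadingTerm D (f i) (a i) (c i)) (hc : ∀ i, c i ≠ 0) (ha : a.Injective) :
    LinearIndependent R f := by
  classical
  refine linearIndependent_iff'.2 fun s g hsum => ?_
  by_contra! hg
  obtain ⟨i, hi, hmax⟩ := Finset.exists_max_image (s.filter (g · ≠ 0)) (D ∘ a)
    (by simpa [Finset.filter_nonempty_iff] using hg)
  rw [Finset.mem_filter] at hi
  have hcoeff : (∑ j ∈ s, g j • f j).coeff (a i) = g i * c i := by
    rw [coeff_sum, Finsupp.finsetSum_apply, Finset.sum_eq_single i _ (absurd hi.1)]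
    · rw [coeff_smul_apply, (hf i).1, smul_eq_mul]
    intro j hj hji
    rw [coeff_smul_apply, smul_eq_mul]
    by_cases hgj : g j = 0
    · rw [hgj, zero_mul]
    by_contra hne
    have hlt := (hf j).2 (a i) (Finsupp.mem_support_iff.2 (right_ne_zero_of_mul hne))
      (ha.ne (Ne.symm hji))
    exact (hmax j (Finset.mem_filter.2 ⟨hj, hgj⟩)).not_gt hlt
  rw [hsum] at hcoeff
  exact mul_ne_zero hi.2 (hc i) hcoeff.symm

end AddMonoidAlgebra

theorem algebraicIndependent_of_linearIndependent_monomials {ι R S : Type*} [CommRing R]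
    [CommRing S] [Algebra R S] {x : ι → S}
    (h : LinearIndependent R fun m : ι →₀ ℕ => m.prod fun i k => x i ^ k) :
    AlgebraicIndependent R x := by
  refine LinearMap.injective_of_linearIndependent (f := (MvPolynomial.aeval x).toLinearMap)
    (MvPolynomial.basisMonomials ι R).span_eq ?_
  have hmon : (MvPolynomial.aeval x).toLinearMap ∘ MvPolynomial.basisMonomials ι R =
      fun m => m.prod fun i k => x i ^ k := by
    ext m
    simp [MvPolynomial.aeval_monomial]
  rwa [hmon]

open AddMonoidAlgebra

section

variable {K F}

theorem zt_eq_single_add_single (n : ℤ) :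
    zt K F n = single (Finsupp.single n 1) 1 + single (Finsupp.single (n + 1) (-1)) (F n) := by
  rw [zt, yt, ytinv, coe_algebraMap, Function.comp_apply, single_mul_single]
  simp

theorem toLex_single_succ_neg_one_lt (n : ℤ) :
    toLex (Finsupp.single (n + 1) (-1 : ℤ)) < toLex (Finsupp.single n 1) := by
  apply Finsupp.lex_lt_of_lt
  refine lt_of_le_of_ne (fun i => ?_) fun h => ?_
  · simp only [ofLex_toLex, Finsupp.single_apply]
    split_ifs <;> omega
  · simpa using DFunLike.congr_fun h n

theorem hasLeadingTerm_zt (n : ℤ) :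
    HasLeadingTerm toLex (zt K F n) (Finsupp.single n 1) 1 := by
  rw [zt_eq_single_add_single]
  exact hasLeadingTerm_single_add_single (toLex_single_succ_neg_one_lt n) _ _

theorem hasLeadingTerm_prod_zt (m : ℤ →₀ ℕ) :
    HasLeadingTerm toLex (m.prod fun n k => zt K F n ^ k)
      (Finsupp.mapRange (↑) Nat.cast_zero m) 1 := by
  have h := HasLeadingTerm.prod toLex.injective (fun _ _ => rfl) (s := m.support)
    fun n _ => (hasLeadingTerm_zt (F := F) n).pow toLex.injective (fun _ _ => rfl) (m n)
  simp only [one_pow, Finset.prod_const_one] at h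
  have hexp : Finsupp.mapRange ((↑) : ℕ → ℤ) Nat.cast_zero m =
      ∑ n ∈ m.support, m n • Finsupp.single n 1 := by
    ext k
    simp [Finsupp.finsetSum_apply, Finsupp.single_apply]
  rw [hexp]
  exact h

end

theorem stmt_16 :
    AlgebraicIndependent K (fun n : ℤ => zt K F n) :=
  algebraicIndependent_of_linearIndependent_monomials <|
    linearIndependent_of_hasLeadingTerm hasLeadingTerm_prod_zt (fun _ => one_ne_zero)
      (Finsupp.mapRange_injective _ _ Nat.cast_injective)
end
end
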